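/- If f : [a,b] → ℝ is piecewise smooth with a single jump discontinuity and g is the linear interpolant correction, then the difference of cell averages across the discontinuity satisfies |Q̄_{i+1} − Q̄_i| ≥ |[f]| − C h, where [f] is the jump and C bounds the derivative of the smooth part; hence for h small enough the Fu–Shu‑type numerator does not vanish near a discontinuity. -/

import Mathlib

open MeasureTheory

private lemma pointwise_bound_left (f f' : ℝ → ℝ) (a b L C : ℝ)
    (hd : ∀ x ∈ Set.Ioo a b, HasDerivAt f (f' x) x)
    (hb : ∀ x ∈ Set.Ioo a b, |f' x| ≤ C)
    (hlim : Filter.Tendsto f (nhdsWithin b (Set.Iio b)) (nhds L)) :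
    ∀ x ∈ Set.Ioo a b, |f x - L| ≤ C * (b - x) := by
  intro x hx
  have hmvt : ∀ y ∈ Set.Ioo a b, ‖f y - f x‖ ≤ C * ‖y - x‖ :=
    fun y hy => Convex.norm_image_sub_le_of_norm_hasDerivWithin_le
      (fun z hz => (hd z hz).hasDerivWithinAt) hb (convex_Ioo a b) hx hy
  have htend : Filter.Tendsto (fun y => ‖f y - f x‖) (nhdsWithin b (Set.Iio b))
      (nhds ‖L - f x‖) := ((hlim.sub tendsto_const_nhds).norm)
  have hev : ∀ᶠ y in nhdsWithin b (Set.Iio b), ‖f y - f x‖ ≤ C * (b - x) := by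
    filter_upwards [Ioo_mem_nhdsLT_of_mem (Set.mem_Ioc.mpr ⟨hx.2, le_refl b⟩)] with y hy
    have h1 : ‖f y - f x‖ ≤ C * ‖y - x‖ := hmvt y ⟨lt_trans hx.1 hy.1, hy.2⟩
    have hC : 0 ≤ C := le_trans (abs_nonneg _) (hb x hx)
    have : ‖y - x‖ ≤ b - x := by
      rw [Real.norm_eq_abs, abs_of_pos (sub_pos.mpr hy.1)]; linarith [hy.2]
    calc ‖f y - f x‖ ≤ C * ‖y - x‖ := h1
      _ ≤ C * (b - x) := by nlinarith [norm_nonneg (y - x)]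
  have := le_of_tendsto htend hev
  calc |f x - L| = ‖L - f x‖ := by rw [← Real.norm_eq_abs, norm_sub_rev]
    _ ≤ C * (b - x) := this

private lemma pointwise_bound_right (f f' : ℝ → ℝ) (a b L C : ℝ)
    (hd : ∀ x ∈ Set.Ioo a b, HasDerivAt f (f' x) x)
    (hb : ∀ x ∈ Set.Ioo a b, |f' x| ≤ C)
    (hlim : Filter.Tendsto f (nhdsWithin a (Set.Ioi a)) (nhds L)) :
    ∀ x ∈ Set.Ioo a b, |f x - L| ≤ C * (x - a) := by
  intro x hx
  have hmvt : ∀ y ∈ Set.Ioo a b, ‖f y - f x‖ ≤ C * ‖y - x‖ :=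
    fun y hy => Convex.norm_image_sub_le_of_norm_hasDerivWithin_le
      (fun z hz => (hd z hz).hasDerivWithinAt) hb (convex_Ioo a b) hx hy
  have htend : Filter.Tendsto (fun y => ‖f y - f x‖) (nhdsWithin a (Set.Ioi a))
      (nhds ‖L - f x‖) := ((hlim.sub tendsto_const_nhds).norm)
  have hev : ∀ᶠ y in nhdsWithin a (Set.Ioi a), ‖f y - f x‖ ≤ C * (x - a) := by
    filter_upwards [Ioo_mem_nhdsGT_of_mem (Set.mem_Ico.mpr ⟨le_refl a, hx.1⟩)] with y hy
    have h1 : ‖f y - f x‖ ≤ C * ‖y - x‖ := hmvt y ⟨hy.1, lt_trans hy.2 hx.2⟩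
    have hC : 0 ≤ C := le_trans (abs_nonneg _) (hb x hx)
    have : ‖y - x‖ ≤ x - a := by
      rw [Real.norm_eq_abs, abs_of_neg (sub_neg.mpr hy.2)]; linarith [hy.1]
    calc ‖f y - f x‖ ≤ C * ‖y - x‖ := h1
      _ ≤ C * (x - a) := by nlinarith [norm_nonneg (y - x)]
  have := le_of_tendsto htend hev
  calc |f x - L| = ‖L - f x‖ := by rw [← Real.norm_eq_abs, norm_sub_rev]
    _ ≤ C * (x - a) := this

private lemma integral_bound_left (f f' : ℝ → ℝ) (a b L C : ℝ) (hab : a < b) (hC : 0 ≤ C)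
    (hd : ∀ x ∈ Set.Ioo a b, HasDerivAt f (f' x) x)
    (hb : ∀ x ∈ Set.Ioo a b, |f' x| ≤ C)
    (hlim : Filter.Tendsto f (nhdsWithin b (Set.Iio b)) (nhds L))
    (hint : IntervalIntegrable f volume a b) :
    |(∫ x in a..b, f x) - (b - a) * L| ≤ C * (b - a) ^ 2 / 2 := by
  have hpt := pointwise_bound_left f f' a b L C hd hb hlim
  have hintL : IntervalIntegrable (fun _ : ℝ => L) volume a b := intervalIntegrable_const
  have heq : (∫ x in a..b, f x) - (b - a) * L = ∫ x in a..b, (f x - L) := by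
    rw [intervalIntegral.integral_sub hint hintL, intervalIntegral.integral_const, smul_eq_mul]
  rw [heq]
  have hg : IntervalIntegrable (fun x => C * (b - x)) volume a b :=
    (Continuous.intervalIntegrable (by continuity)) a b
  have hae : ∀ᵐ t ∂(volume.restrict (Set.uIoc a b)), ‖f t - L‖ ≤ C * (b - t) := by
    rw [Set.uIoc_of_le hab.le, ← Measure.restrict_congr_set Ioo_ae_eq_Ioc]
    exact ae_restrict_of_forall_mem measurableSet_Ioo
      (fun x hx => by rw [Real.norm_eq_abs]; exact hpt x hx)
  have := intervalIntegral.norm_integral_le_abs_of_norm_le hae hg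
  have hval : (∫ x in a..b, C * (b - x)) = C * (b - a) ^ 2 / 2 := by
    rw [intervalIntegral.integral_const_mul]
    have : (∫ x in a..b, (b - x)) = (b - a) ^ 2 / 2 := by
      rw [intervalIntegral.integral_sub (intervalIntegrable_const)
        ((Continuous.intervalIntegrable continuous_id') a b)]
      simp [integral_id, intervalIntegral.integral_const, smul_eq_mul]
      ring
    rw [this]; ring
  calc ‖∫ x in a..b, (f x - L)‖ ≤ |∫ x in a..b, C * (b - x)| := this
    _ = C * (b - a) ^ 2 / 2 := by
        rw [hval, abs_of_nonneg (by positivity)]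

private lemma integral_bound_right (f f' : ℝ → ℝ) (a b L C : ℝ) (hab : a < b) (hC : 0 ≤ C)
    (hd : ∀ x ∈ Set.Ioo a b, HasDerivAt f (f' x) x)
    (hb : ∀ x ∈ Set.Ioo a b, |f' x| ≤ C)
    (hlim : Filter.Tendsto f (nhdsWithin a (Set.Ioi a)) (nhds L))
    (hint : IntervalIntegrable f volume a b) :
    |(∫ x in a..b, f x) - (b - a) * L| ≤ C * (b - a) ^ 2 / 2 := by
  have hpt := pointwise_bound_right f f' a b L C hd hb hlim
  have hintL : IntervalIntegrable (fun _ : ℝ => L) volume a b := intervalIntegrable_const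
  have heq : (∫ x in a..b, f x) - (b - a) * L = ∫ x in a..b, (f x - L) := by
    rw [intervalIntegral.integral_sub hint hintL, intervalIntegral.integral_const, smul_eq_mul]
  rw [heq]
  have hg : IntervalIntegrable (fun x => C * (x - a)) volume a b :=
    (Continuous.intervalIntegrable (by continuity)) a b
  have hae : ∀ᵐ t ∂(volume.restrict (Set.uIoc a b)), ‖f t - L‖ ≤ C * (t - a) := by
    rw [Set.uIoc_of_le hab.le, ← Measure.restrict_congr_set Ioo_ae_eq_Ioc]
    exact ae_restrict_of_forall_mem measurableSet_Ioo
      (fun x hx => by rw [Real.norm_eq_abs]; exact hpt x hx)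
  have := intervalIntegral.norm_integral_le_abs_of_norm_le hae hg
  have hval : (∫ x in a..b, C * (x - a)) = C * (b - a) ^ 2 / 2 := by
    rw [intervalIntegral.integral_const_mul]
    have : (∫ x in a..b, (x - a)) = (b - a) ^ 2 / 2 := by
      rw [intervalIntegral.integral_sub ((Continuous.intervalIntegrable continuous_id') a b)
        (intervalIntegrable_const)]
      simp [integral_id, intervalIntegral.integral_const, smul_eq_mul]
      ring
    rw [this]; ring
  calc ‖∫ x in a..b, (f x - L)‖ ≤ |∫ x in a..b, C * (x - a)| := this
    _ = C * (b - a) ^ 2 / 2 := by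
        rw [hval, abs_of_nonneg (by positivity)]

/-- Near a jump discontinuity, the difference of adjacent cell averages is at least the jump
minus `C h`; hence for `h` small (so that `C h < |[f]|`) the Fu–Shu-type numerator does not
vanish. -/
theorem cell_average_jump (f f' : ℝ → ℝ) (ξ h C fL fR : ℝ) (hh : 0 < h) (hC : 0 ≤ C)
    (hjump : fR - fL ≠ 0)
    (hdL : ∀ x ∈ Set.Ioo (ξ - h) ξ, HasDerivAt f (f' x) x)
    (hdR : ∀ x ∈ Set.Ioo ξ (ξ + h), HasDerivAt f (f' x) x)
    (hbL : ∀ x ∈ Set.Ioo (ξ - h) ξ, |f' x| ≤ C)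
    (hbR : ∀ x ∈ Set.Ioo ξ (ξ + h), |f' x| ≤ C)
    (hlimL : Filter.Tendsto f (nhdsWithin ξ (Set.Iio ξ)) (nhds fL))
    (hlimR : Filter.Tendsto f (nhdsWithin ξ (Set.Ioi ξ)) (nhds fR))
    (hintL : IntervalIntegrable f volume (ξ - h) ξ)
    (hintR : IntervalIntegrable f volume ξ (ξ + h)) :
    |((1 / h) * ∫ x in ξ..(ξ + h), f x) - ((1 / h) * ∫ x in (ξ - h)..ξ, f x)| ≥
      |fR - fL| - C * h ∧
    (C * h < |fR - fL| →
      ((1 / h) * ∫ x in ξ..(ξ + h), f x) - ((1 / h) * ∫ x in (ξ - h)..ξ, f x) ≠ 0) := by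
  have habL : ξ - h < ξ := by linarith
  have habR : ξ < ξ + h := by linarith
  have hL := integral_bound_left f f' (ξ - h) ξ fL C habL hC hdL hbL hlimL hintL
  have hR := integral_bound_right f f' ξ (ξ + h) fR C habR hC hdR hbR hlimR hintR
  rw [show ξ - (ξ - h) = h by ring] at hL
  rw [show ξ + h - ξ = h by ring] at hR
  set IL := ∫ x in (ξ - h)..ξ, f x
  set IR := ∫ x in ξ..(ξ + h), f x
  have hQL : |(1 / h) * IL - fL| ≤ C * h / 2 := by
    have : (1 / h) * IL - fL = (1 / h) * (IL - h * fL) := by field_simp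
    rw [this, abs_mul, abs_of_pos (by positivity : (0:ℝ) < 1 / h)]
    calc (1 / h) * |IL - h * fL| ≤ (1 / h) * (C * h ^ 2 / 2) := by
          apply mul_le_mul_of_nonneg_left hL (by positivity)
      _ = C * h / 2 := by field_simp
  have hQR : |(1 / h) * IR - fR| ≤ C * h / 2 := by
    have : (1 / h) * IR - fR = (1 / h) * (IR - h * fR) := by field_simp
    rw [this, abs_mul, abs_of_pos (by positivity : (0:ℝ) < 1 / h)]
    calc (1 / h) * |IR - h * fR| ≤ (1 / h) * (C * h ^ 2 / 2) := by
          apply mul_le_mul_of_nonneg_left hR (by positivity)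
      _ = C * h / 2 := by field_simp
  have key : |(1 / h) * IR - (1 / h) * IL| ≥ |fR - fL| - C * h := by
    have h1 : |fR - fL| ≤ |(1 / h) * IR - (1 / h) * IL| + |(1 / h) * IR - fR| +
        |(1 / h) * IL - fL| := by
      have := abs_sub_abs_le_abs_sub (fR - fL) ((1 / h) * IR - (1 / h) * IL)
      have h2 : |(fR - fL) - ((1 / h) * IR - (1 / h) * IL)| ≤
          |(1 / h) * IR - fR| + |(1 / h) * IL - fL| := by
        have : (fR - fL) - ((1 / h) * IR - (1 / h) * IL) =
            -((1 / h) * IR - fR) + ((1 / h) * IL - fL) := by ring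
        rw [this]
        exact le_trans (abs_add_le _ _) (by rw [abs_neg])
      calc |fR - fL| ≤ |(1 / h) * IR - (1 / h) * IL| +
            |(fR - fL) - ((1 / h) * IR - (1 / h) * IL)| := by
            have := abs_sub_abs_le_abs_sub (fR - fL) ((1 / h) * IR - (1 / h) * IL)
            linarith [abs_sub (fR - fL) ((1 / h) * IR - (1 / h) * IL)]
        _ ≤ _ := by linarith
    linarith
  refine ⟨key, fun hsmall => ?_⟩
  intro hzero
  rw [hzero, abs_zero] at key
  linarith
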